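/- arXiv:1904.12334 — 2 statements merged into one kernel-verified Lean document; each statement's English description precedes it below -/
import Mathlib

section
/- Let (V,d) be a metric space and let ε ≥ 0. Suppose j, ℓ, f*, f' are points with d(ℓ, f*) ≥ R/(1+ε) for some R > 0, d(j, f*) ≥ d(ℓ, f*), and d(f*, f') = 2R. Then d(j, f') ≤ (3 + 2ε) · d(j, f*). -/
/-- Key geometric inequality: if `d(ℓ,f⋆) ≥ R/(1+ε)`, `d(j,f⋆) ≥ d(ℓ,f⋆)` and
`d(f⋆,f') = 2R`, then `d(j,f') ≤ (3+2ε) d(j,f⋆)`. -/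
theorem stmt_4 {V : Type*} [MetricSpace V] (ε : ℝ) (hε : 0 ≤ ε)
    (j ℓ fstar f' : V) (R : ℝ) (hR : 0 < R)
    (h1 : R / (1 + ε) ≤ dist ℓ fstar)
    (h2 : dist ℓ fstar ≤ dist j fstar)
    (h3 : dist fstar f' = 2 * R) :
    dist j f' ≤ (3 + 2 * ε) * dist j fstar := by
  have hpos : (0:ℝ) < 1 + ε := by linarith
  have hR' : R ≤ (1 + ε) * dist j fstar := by
    have := (div_le_iff₀ hpos).mp h1
    nlinarith
  calc dist j f' ≤ dist j fstar + dist fstar f' := dist_triangle _ _ _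
    _ = dist j fstar + 2 * R := by rw [h3]
    _ ≤ (3 + 2 * ε) * dist j fstar := by nlinarith
end

section
/- Let (V,d) be a metric space, C ⊆ V finite with weights w : C → ℝ≥0, and F* ⊆ V a finite nonempty set. For each f* ∈ F*, let η(f*) ∈ C be a client minimizing d(·, f*) over the clients j ∈ C whose nearest point of F* is f*, assuming each f* serves at least one client. Let F' := {η(f*) : f* ∈ F*}. Then Σ_{j∈C} w_j · d(j, F') ≤ 2 · Σ_{j∈C} w_j · d(j, F*), where d(j, X) := min_{x∈X} d(j, x). -/
open Finset

/-- Moving each optimal center `f⋆` to its closest served client `η(f⋆)` at most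
doubles the weighted connection cost. -/
theorem stmt_15 {V : Type*} [MetricSpace V] [DecidableEq V]
    (C : Finset V) (w : V → ℝ) (hw : ∀ j, 0 ≤ w j)
    (Fstar : Finset V) (hFstar : Fstar.Nonempty)
    (η : V → V)
    (hηC : ∀ f ∈ Fstar, η f ∈ C)
    (hserved : ∀ f ∈ Fstar,
      Fstar.inf' hFstar (fun g => dist (η f) g) = dist (η f) f)
    (hmin : ∀ f ∈ Fstar, ∀ j ∈ C,
      Fstar.inf' hFstar (fun g => dist j g) = dist j f → dist (η f) f ≤ dist j f) :
    ∑ j ∈ C, w j * (Fstar.image η).inf' (hFstar.image η) (fun x => dist j x)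
      ≤ 2 * ∑ j ∈ C, w j * Fstar.inf' hFstar (fun x => dist j x) := by
  rw [two_mul, ← Finset.sum_add_distrib]
  apply Finset.sum_le_sum
  intro j hj
  rw [← mul_add]
  apply mul_le_mul_of_nonneg_left _ (hw j)
  -- pick f attaining the inf for j
  obtain ⟨f, hf, hfeq⟩ := Fstar.exists_mem_eq_inf' hFstar (fun g => dist j g)
  calc (Fstar.image η).inf' (hFstar.image η) (fun x => dist j x)
      ≤ dist j (η f) := Finset.inf'_le _ (Finset.mem_image_of_mem η hf)
    _ ≤ dist j f + dist f (η f) := dist_triangle _ _ _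
    _ = dist j f + dist (η f) f := by rw [dist_comm f (η f)]
    _ ≤ dist j f + dist j f := by
        have := hmin f hf j hj hfeq
        linarith
    _ = Fstar.inf' hFstar (fun x => dist j x) +
        Fstar.inf' hFstar (fun x => dist j x) := by rw [← hfeq]
end
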